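/- arXiv:2511.00912 — 9 statements merged into one kernel-verified Lean document; each statement's English description precedes it below -/
import Mathlib

section
/- Let 𝔐 = (M, ⊨, P(L)) be a normal abstract model structure and let S = (L, ⊢) be the logical structure induced by 𝔐. Then S is finitary if and only if, for every finite Λ ⊆ L, the anti-model structure 𝔐_Λ is compact. -/
open Set

/-- A set `Γ ⊆ L` is satisfiable in the amst given by `sat` if some model satisfies it. -/
def AmstSatisfiable {M L : Type*} (sat : M → Set L → Prop) (Γ : Set L) : Prop :=
  ∃ m : M, sat m Γ

/-- `Γ` is finitely satisfiable if every finite subset of `Γ` is satisfiable. -/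
def AmstFinSatisfiable {M L : Type*} (sat : M → Set L → Prop) (Γ : Set L) : Prop :=
  ∀ Δ : Set L, Δ ⊆ Γ → Δ.Finite → AmstSatisfiable sat Δ

/-- An amst is compact if satisfiability and finite satisfiability coincide. -/
def AmstCompact {M L : Type*} (sat : M → Set L → Prop) : Prop :=
  ∀ Γ : Set L, AmstSatisfiable sat Γ ↔ AmstFinSatisfiable sat Γ

/-- `ModOf sat Γ` is the set of models satisfying `Γ`. -/
def ModOf {M L : Type*} (sat : M → Set L → Prop) (Γ : Set L) : Set M :=
  {m : M | sat m Γ}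

/-- The consequence relation of the logical structure induced by the amst:
`Γ ⊢ α` iff `Mod(Γ) ⊆ Mod({α})`. -/
def Entails {M L : Type*} (sat : M → Set L → Prop) (Γ : Set L) (α : L) : Prop :=
  ModOf sat Γ ⊆ ModOf sat ({α} : Set L)

/-- A logical structure (given by its consequence relation) is finitary. -/
def IsFinitary {L : Type*} (turn : Set L → L → Prop) : Prop :=
  ∀ (Γ : Set L) (α : L), turn Γ α → ∃ Γ' : Set L, Γ' ⊆ Γ ∧ Γ'.Finite ∧ turn Γ' α

/-- An amst is normal if satisfaction of a set is equivalent to satisfaction of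
each of its singletons. -/
def AmstNormal {M L : Type*} (sat : M → Set L → Prop) : Prop :=
  ∀ (m : M) (Γ : Set L), sat m Γ ↔ ∀ α ∈ Γ, sat m ({α} : Set L)

/-- The anti-model structure relative to `Λ`: domain `M \ Mod(Λ)`, satisfaction restricted. -/
def AntiSat {M L : Type*} (sat : M → Set L → Prop) (Λ : Set L) :
    {m : M // m ∉ ModOf sat Λ} → Set L → Prop :=
  fun m Γ => sat m.1 Γ

/-- A set is explosive (trivial) in a logical structure if it entails everything. -/
def IsExplosive {L : Type*} (turn : Set L → L → Prop) (Γ : Set L) : Prop :=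
  ∀ γ : L, turn Γ γ

/-- gECQ for a logical structure. -/
def GECQ {L : Type*} (turn : Set L → L → Prop) : Prop :=
  ∀ α : L, ∃ β : L, IsExplosive turn ({α, β} : Set L)

/-- sECQ for a logical structure. -/
def SECQ {L : Type*} (turn : Set L → L → Prop) : Prop :=
  ∀ α : L, ∃ Γ : Set L, Γ ∪ {α} ≠ univ ∧ IsExplosive turn (Γ ∪ {α})

/-- spECQ for a logical structure. -/
def SPECQ {L : Type*} (turn : Set L → L → Prop) : Prop :=
  ∀ Γ : Set L, Γ ≠ univ → ∃ α : L, Γ ∪ {α} ≠ univ ∧ IsExplosive turn (Γ ∪ {α})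

/-- pfECQ for a logical structure. -/
def PFECQ {L : Type*} (turn : Set L → L → Prop) : Prop :=
  ∀ Γ : Set L, Γ ≠ univ → ∃ Δ : Set L, Δ ≠ univ ∧ Γ ⊆ Δ ∧ IsExplosive turn Δ

/-- gECQ-sat for an amst. -/
def GECQsat {M L : Type*} (sat : M → Set L → Prop) : Prop :=
  ∀ α : L, ∃ β : L, ¬ AmstSatisfiable sat ({α, β} : Set L)

/-- sECQ-sat for an amst. -/
def SECQsat {M L : Type*} (sat : M → Set L → Prop) : Prop :=
  ∀ α : L, ∃ Γ : Set L, Γ ∪ {α} ≠ univ ∧ ¬ AmstSatisfiable sat (Γ ∪ {α})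

/-- spECQ-sat for an amst. -/
def SPECQsat {M L : Type*} (sat : M → Set L → Prop) : Prop :=
  ∀ Γ : Set L, Γ ≠ univ → ∃ α : L, Γ ∪ {α} ≠ univ ∧ ¬ AmstSatisfiable sat (Γ ∪ {α})

/-- pfECQ-sat for an amst. -/
def PFECQsat {M L : Type*} (sat : M → Set L → Prop) : Prop :=
  ∀ Γ : Set L, Γ ≠ univ → ∃ Δ : Set L, Δ ≠ univ ∧ Γ ⊆ Δ ∧ ¬ AmstSatisfiable sat Δ

/-- gECQ-finsat for an amst. -/
def GECQfinsat {M L : Type*} (sat : M → Set L → Prop) : Prop :=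
  ∀ α : L, ∃ β : L, ¬ AmstFinSatisfiable sat ({α, β} : Set L)

/-- sECQ-finsat for an amst. -/
def SECQfinsat {M L : Type*} (sat : M → Set L → Prop) : Prop :=
  ∀ α : L, ∃ Γ : Set L, Γ ∪ {α} ≠ univ ∧ ¬ AmstFinSatisfiable sat (Γ ∪ {α})

/-- spECQ-finsat for an amst. -/
def SPECQfinsat {M L : Type*} (sat : M → Set L → Prop) : Prop :=
  ∀ Γ : Set L, Γ ≠ univ → ∃ α : L, Γ ∪ {α} ≠ univ ∧ ¬ AmstFinSatisfiable sat (Γ ∪ {α})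

/-- pfECQ-finsat for an amst. -/
def PFECQfinsat {M L : Type*} (sat : M → Set L → Prop) : Prop :=
  ∀ Γ : Set L, Γ ≠ univ → ∃ Δ : Set L, Δ ≠ univ ∧ Γ ⊆ Δ ∧ ¬ AmstFinSatisfiable sat Δ

/-- `Σ'` is satisfiable relative to a collection `K` of subsets of `L` if every
subset of `Σ'` belonging to `K` is satisfiable. -/
def KSatisfiable {M L : Type*} (sat : M → Set L → Prop) (K : Set (Set L)) (S : Set L) : Prop :=
  ∀ Δ : Set L, Δ ⊆ S → Δ ∈ K → AmstSatisfiable sat Δ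

/-- The principal ultrafilter on `I` generated by `s` (as a family of subsets of `I`). -/
def PrincipalUF {L : Type*} (I : Set L) (s : L) : Set (Set L) :=
  {X : Set L | X ⊆ I ∧ s ∈ X}

/- In a normal amst, `Mod(Γ) = ⋂_{α ∈ Γ} Mod({α})`, and `Γ` is unsatisfiable in `𝔐_Λ`
exactly when `Mod(Γ) ⊆ Mod(Λ)`, i.e. when `Γ ⊢ α` for every `α ∈ Λ`. Compactness of `𝔐_Λ` thus
says that such an entailment of a finite `Λ` always has a finite witness `Δ ⊆ Γ`. Finitarity gives
one witness per `α ∈ Λ`, and their finite union works; conversely, `Λ = {α}` is finitarity. -/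

section Amst

variable {M L : Type*} {sat : M → Set L → Prop}

theorem AmstNormal.modOf_eq_biInter (hnorm : AmstNormal sat) (Γ : Set L) :
    ModOf sat Γ = ⋂ α ∈ Γ, ModOf sat {α} := by
  ext m
  simpa only [ModOf, mem_iInter, mem_ofPred_eq] using hnorm m Γ

theorem AmstNormal.antitone_modOf (hnorm : AmstNormal sat) : Antitone (ModOf sat) := by
  intro Δ Γ hΔΓ
  rw [hnorm.modOf_eq_biInter, hnorm.modOf_eq_biInter]
  exact biInter_subset_biInter_left hΔΓ

theorem AmstNormal.modOf_subset_iff (hnorm : AmstNormal sat) {Γ Λ : Set L} :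
    ModOf sat Γ ⊆ ModOf sat Λ ↔ ∀ α ∈ Λ, Entails sat Γ α := by
  rw [hnorm.modOf_eq_biInter Λ]
  exact subset_iInter₂_iff

theorem AmstFinSatisfiable.of_satisfiable (hanti : Antitone (ModOf sat)) {Γ : Set L}
    (h : AmstSatisfiable sat Γ) : AmstFinSatisfiable sat Γ := by
  obtain ⟨m, hm⟩ := h
  exact fun Δ hΔΓ _ => ⟨m, hanti hΔΓ hm⟩

theorem amstCompact_iff_of_antitone (hanti : Antitone (ModOf sat)) :
    AmstCompact sat ↔ ∀ Γ, AmstFinSatisfiable sat Γ → AmstSatisfiable sat Γ :=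
  forall_congr' fun _ => ⟨Iff.mpr, fun h => ⟨.of_satisfiable hanti, h⟩⟩

theorem antitone_modOf_antiSat (hanti : Antitone (ModOf sat)) (Λ : Set L) :
    Antitone (ModOf (AntiSat sat Λ)) :=
  fun _ _ hΔΓ _ hm => hanti hΔΓ hm

theorem antiSat_satisfiable_iff {Λ Γ : Set L} :
    AmstSatisfiable (AntiSat sat Λ) Γ ↔ ¬ ModOf sat Γ ⊆ ModOf sat Λ := by
  constructor
  · rintro ⟨⟨m, hmΛ⟩, hmΓ⟩ hΓΛ
    exact hmΛ (hΓΛ hmΓ)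
  · intro hΓΛ
    obtain ⟨m, hmΓ, hmΛ⟩ := not_subset.1 hΓΛ
    exact ⟨⟨m, hmΛ⟩, hmΓ⟩

theorem antiSat_compact_iff (hanti : Antitone (ModOf sat)) (Λ : Set L) :
    AmstCompact (AntiSat sat Λ) ↔ ∀ Γ, ModOf sat Γ ⊆ ModOf sat Λ →
      ∃ Δ ⊆ Γ, Δ.Finite ∧ ModOf sat Δ ⊆ ModOf sat Λ := by
  simp only [amstCompact_iff_of_antitone (antitone_modOf_antiSat hanti Λ), AmstFinSatisfiable,
    antiSat_satisfiable_iff]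
  refine forall_congr' fun Γ => ?_
  rw [← not_imp_not]
  push Not
  rfl

theorem IsFinitary.exists_finite_modOf_subset (hnorm : AmstNormal sat)
    (hfin : IsFinitary (Entails sat)) {Γ Λ : Set L} (hΛ : Λ.Finite)
    (hΓΛ : ModOf sat Γ ⊆ ModOf sat Λ) : ∃ Δ ⊆ Γ, Δ.Finite ∧ ModOf sat Δ ⊆ ModOf sat Λ := by
  have hwit : ∀ α ∈ Λ, ∃ Γ' ⊆ Γ, Γ'.Finite ∧ Entails sat Γ' α :=
    fun α hα => hfin Γ α (hnorm.modOf_subset_iff.1 hΓΛ α hα)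
  choose! wit hwitΓ hwitFin hwitEnt using hwit
  refine ⟨⋃ α ∈ Λ, wit α, iUnion₂_subset hwitΓ, hΛ.biUnion hwitFin, ?_⟩
  refine hnorm.modOf_subset_iff.2 fun α hα => ?_
  exact (hnorm.antitone_modOf (subset_biUnion_of_mem hα)).trans (hwitEnt α hα)

theorem isFinitary_of_antiSat_compact (hanti : Antitone (ModOf sat))
    (hcomp : ∀ α : L, AmstCompact (AntiSat sat {α})) :
    IsFinitary (Entails sat) :=
  fun Γ α hΓα => (antiSat_compact_iff hanti {α} |>.1 (hcomp α)) Γ hΓα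

end Amst

theorem finitary_iff_antiModel_compact_of_normal_general {M L : Type*}
    (sat : M → Set L → Prop) (hnorm : AmstNormal sat) :
    IsFinitary (Entails sat) ↔ ∀ Λ : Set L, Λ.Finite → AmstCompact (AntiSat sat Λ) := by
  refine ⟨fun hfin Λ hΛ => ?_, fun hcomp => ?_⟩
  · exact (antiSat_compact_iff hnorm.antitone_modOf Λ).2 fun Γ =>
      hfin.exists_finite_modOf_subset hnorm hΛ
  · exact isFinitary_of_antiSat_compact hnorm.antitone_modOf fun α =>
      hcomp {α} (finite_singleton α)

/-- for normal amsts, `S` is finitary iff `𝔐_Λ` is compact for every finite `Λ`. -/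
theorem finitary_iff_antiModel_compact_of_normal {M L : Type*} [Nonempty M]
    (sat : M → Set L → Prop) (hnorm : AmstNormal sat) :
    IsFinitary (Entails sat) ↔ ∀ Λ : Set L, Λ.Finite → AmstCompact (AntiSat sat Λ) :=
  finitary_iff_antiModel_compact_of_normal_general sat hnorm
end

section
/- Let 𝔐 = (M, ⊨, P(L)) be a normal abstract model structure such that the logical structure S = (L, ⊢) induced by 𝔐 is finitary. If there exists a finite unsatisfiable subset of L, then 𝔐 is compact. -/
open Set

/- An unsatisfiable set `Γ` entails every formula, in particular every member of the given finite
unsatisfiable set `Γ₀`. Finitarity provides, for each `α ∈ Γ₀`, a finite `Δ_α ⊆ Γ` entailing `α`;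
their union is a finite subset of `Γ` which, by normality, entails all of `Γ₀` and hence has no
model. -/

section

variable {M L : Type*} {sat : M → Set L → Prop}

theorem AmstNormal.sat_mono (hnorm : AmstNormal sat) {m : M} {Δ Γ : Set L} (hΔΓ : Δ ⊆ Γ)
    (hm : sat m Γ) : sat m Δ :=
  (hnorm m Δ).mpr fun α hα => (hnorm m Γ).mp hm α (hΔΓ hα)

theorem AmstNormal.finSatisfiable_of_satisfiable (hnorm : AmstNormal sat) {Γ : Set L}
    (hΓ : AmstSatisfiable sat Γ) : AmstFinSatisfiable sat Γ := by
  obtain ⟨m, hm⟩ := hΓ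
  exact fun Δ hΔΓ _ => ⟨m, hnorm.sat_mono hΔΓ hm⟩

theorem AmstNormal.modOf_subset_of_entails (hnorm : AmstNormal sat) {Δ Γ : Set L}
    (h : ∀ α ∈ Γ, Entails sat Δ α) : ModOf sat Δ ⊆ ModOf sat Γ :=
  fun m hm => (hnorm m Γ).mpr fun α hα => h α hα hm

theorem entails_of_not_satisfiable {Γ : Set L} (hΓ : ¬ AmstSatisfiable sat Γ) (α : L) :
    Entails sat Γ α :=
  fun m hm => (hΓ ⟨m, hm⟩).elim

theorem IsFinitary.exists_finite_subset_entails_of_finite (hfin : IsFinitary (Entails sat))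
    (hnorm : AmstNormal sat) {Γ Γ₀ : Set L} (hΓ₀ : Γ₀.Finite) (h : ∀ α ∈ Γ₀, Entails sat Γ α) :
    ∃ Δ ⊆ Γ, Δ.Finite ∧ ∀ α ∈ Γ₀, Entails sat Δ α := by
  choose! f hfΓ hffin hfent using fun α hα => hfin Γ α (h α hα)
  refine ⟨⋃ α ∈ Γ₀, f α, iUnion₂_subset hfΓ, hΓ₀.biUnion hffin, fun α hα m hm => ?_⟩
  exact hfent α hα (hnorm.sat_mono (subset_biUnion_of_mem hα) hm)

theorem exists_finite_not_satisfiable_subset (hnorm : AmstNormal sat)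
    (hfin : IsFinitary (Entails sat)) {Γ₀ : Set L} (hΓ₀ : Γ₀.Finite)
    (hΓ₀unsat : ¬ AmstSatisfiable sat Γ₀) {Γ : Set L} (hΓ : ¬ AmstSatisfiable sat Γ) :
    ∃ Δ ⊆ Γ, Δ.Finite ∧ ¬ AmstSatisfiable sat Δ := by
  obtain ⟨Δ, hΔΓ, hΔfin, hΔent⟩ :=
    hfin.exists_finite_subset_entails_of_finite hnorm hΓ₀ fun α _ => entails_of_not_satisfiable hΓ α
  exact ⟨Δ, hΔΓ, hΔfin, fun ⟨m, hm⟩ => hΓ₀unsat ⟨m, hnorm.modOf_subset_of_entails hΔent hm⟩⟩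

end

theorem compact_of_normal_finitary_of_finite_unsat_general {M L : Type*}
    (sat : M → Set L → Prop) (hnorm : AmstNormal sat)
    (hfin : IsFinitary (Entails sat))
    (hexists : ∃ Γ : Set L, Γ.Finite ∧ ¬ AmstSatisfiable sat Γ) :
    AmstCompact sat := by
  obtain ⟨Γ₀, hΓ₀fin, hΓ₀unsat⟩ := hexists
  refine fun Γ => ⟨hnorm.finSatisfiable_of_satisfiable, fun hfs => ?_⟩
  by_contra hΓ
  obtain ⟨Δ, hΔΓ, hΔfin, hΔ⟩ := exists_finite_not_satisfiable_subset hnorm hfin hΓ₀fin hΓ₀unsat hΓ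
  exact hΔ (hfs Δ hΔΓ hΔfin)

/-- a normal amst inducing a finitary logical structure, having a finite
unsatisfiable set, is compact. -/
theorem compact_of_normal_finitary_of_finite_unsat {M L : Type*} [Nonempty M]
    (sat : M → Set L → Prop) (hnorm : AmstNormal sat)
    (hfin : IsFinitary (Entails sat))
    (hexists : ∃ Γ : Set L, Γ.Finite ∧ ¬ AmstSatisfiable sat Γ) :
    AmstCompact sat :=
  compact_of_normal_finitary_of_finite_unsat_general sat hnorm hfin hexists
end

section
/- Let 𝔐 = (M, ⊨, P(L)) be a normal abstract model structure such that for every α ∈ L there exists a finite set Λ_α ⊆ L with Mod(Λ_α) = M \ Mod({α}). If the logical structure S = (L, ⊢) induced by 𝔐 is finitary, then 𝔐 is compact. -/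
open Set

/-! If `Γ` were finitely satisfiable but unsatisfiable, it would entail every formula, in
particular `α` and all of the finite set `Λ_α`. Finitarity bounds these finitely many
entailments by one finite `Γ' ⊆ Γ`, and a model of `Γ'` would satisfy both `α` and `Λ_α`,
which have no common model. -/

namespace AmstNormal

variable {M L : Type*} {sat : M → Set L → Prop}

theorem modOf_eq_biInter_s4 (hnorm : AmstNormal sat) (Γ : Set L) :
    ModOf sat Γ = ⋂ α ∈ Γ, ModOf sat ({α} : Set L) := by
  ext m
  simp only [ModOf, mem_ofPred_eq, mem_iInter, hnorm m Γ]

theorem modOf_antitone (hnorm : AmstNormal sat) : Antitone (ModOf sat) := fun _ _ hΓ => by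
  rw [hnorm.modOf_eq_biInter_s4, hnorm.modOf_eq_biInter_s4]
  exact biInter_subset_biInter_left hΓ

theorem modOf_biUnion (hnorm : AmstNormal sat) {ι : Type*} (s : Set ι) (Γ : ι → Set L) :
    ModOf sat (⋃ i ∈ s, Γ i) = ⋂ i ∈ s, ModOf sat (Γ i) := by
  rw [hnorm.modOf_eq_biInter_s4, biInter_iUnion]
  simp only [biInter_iUnion]
  exact iInter₂_congr fun i _ => (hnorm.modOf_eq_biInter_s4 (Γ i)).symm

theorem modOf_insert (hnorm : AmstNormal sat) (α : L) (Γ : Set L) :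
    ModOf sat (insert α Γ) = ModOf sat ({α} : Set L) ∩ ModOf sat Γ := by
  rw [hnorm.modOf_eq_biInter_s4 (insert α Γ), biInter_insert, ← hnorm.modOf_eq_biInter_s4]

theorem finSatisfiable_of_satisfiable_s4 (hnorm : AmstNormal sat) {Γ : Set L}
    (h : AmstSatisfiable sat Γ) : AmstFinSatisfiable sat Γ :=
  fun _ hΔ _ => h.imp fun _ hm => hnorm.modOf_antitone hΔ hm

theorem exists_finite_modOf_subset (hnorm : AmstNormal sat) (hfin : IsFinitary (Entails sat))
    {Γ Φ : Set L} (hΦ : Φ.Finite) (h : ModOf sat Γ ⊆ ModOf sat Φ) :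
    ∃ Γ' ⊆ Γ, Γ'.Finite ∧ ModOf sat Γ' ⊆ ModOf sat Φ := by
  have hent : ∀ φ ∈ Φ, Entails sat Γ φ := fun φ hφ =>
    h.trans (hnorm.modOf_antitone (singleton_subset_iff.2 hφ))
  choose! F hFΓ hFfin hFent using fun φ hφ => hfin Γ φ (hent φ hφ)
  refine ⟨⋃ φ ∈ Φ, F φ, iUnion₂_subset hFΓ, hΦ.biUnion hFfin, ?_⟩
  rw [hnorm.modOf_biUnion, hnorm.modOf_eq_biInter_s4 Φ]
  exact iInter₂_mono hFent

end AmstNormal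

theorem compact_of_finitary_general {M L : Type*}
    (sat : M → Set L → Prop) (hnorm : AmstNormal sat)
    (hanti : ∀ α : L, ∃ Λ : Set L, Λ.Finite ∧
      ModOf sat Λ = (univ : Set M) \ ModOf sat ({α} : Set L))
    (hfin : IsFinitary (Entails sat)) :
    AmstCompact sat := by
  intro Γ
  refine ⟨hnorm.finSatisfiable_of_satisfiable_s4, fun hfs => ?_⟩
  by_contra hunsat
  obtain rfl | ⟨α, -⟩ := Γ.eq_empty_or_nonempty
  · exact hunsat (hfs ∅ subset_rfl finite_empty)
  obtain ⟨Λ, hΛfin, hΛ⟩ := hanti α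
  have hcontra : ModOf sat (insert α Λ) = ∅ := by
    rw [hnorm.modOf_insert, hΛ, inter_sdiff_self]
  have hΓ : ModOf sat Γ ⊆ ModOf sat (insert α Λ) := fun m hm => (hunsat ⟨m, hm⟩).elim
  obtain ⟨Γ', hΓ', hΓ'fin, hmod⟩ := hnorm.exists_finite_modOf_subset hfin (hΛfin.insert α) hΓ
  obtain ⟨m, hm⟩ := hfs Γ' hΓ' hΓ'fin
  simpa [hcontra] using hmod hm

/-- if a normal amst has, for each `α`, some finite `Λ_α` with
`Mod(Λ_α) = M \\ Mod({α})`, then finitary-ness implies compactness. -/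
theorem compact_of_finitary {M L : Type*} [Nonempty M]
    (sat : M → Set L → Prop) (hnorm : AmstNormal sat)
    (hanti : ∀ α : L, ∃ Λ : Set L, Λ.Finite ∧
      ModOf sat Λ = (univ : Set M) \ ModOf sat ({α} : Set L))
    (hfin : IsFinitary (Entails sat)) :
    AmstCompact sat :=
  compact_of_finitary_general sat hnorm hanti hfin
end

section
/- Let S = (L, ⊢) be a logical structure with L infinite, and let 𝔐 = (L, ⊨, P(L)) be the abstract model structure whose domain is L itself, where for all Γ ∪ {α} ⊆ L one defines α ⊨ Γ iff Γ ⊬ α. Then: (i) gECQ holds in S iff gECQ-sat holds in 𝔐; (ii) sECQ holds in S iff sECQ-sat holds in 𝔐; (iii) spECQ holds in S iff spECQ-sat holds in 𝔐; (iv) pfECQ holds in S iff pfECQ-sat holds in 𝔐. -/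
open Set

theorem not_amstSatisfiable_iff_isExplosive {L : Type*} (turn : Set L → L → Prop) (Γ : Set L) :
    ¬ AmstSatisfiable (fun (α : L) (Δ : Set L) => ¬ turn Δ α) Γ ↔ IsExplosive turn Γ := by
  simp only [AmstSatisfiable, IsExplosive, not_exists, not_not]

theorem syntactic_iff_sat_variants_general {L : Type*} (turn : Set L → L → Prop) :
    (GECQ turn ↔ GECQsat (fun (α : L) (Γ : Set L) => ¬ turn Γ α)) ∧
      (SECQ turn ↔ SECQsat (fun (α : L) (Γ : Set L) => ¬ turn Γ α)) ∧
      (SPECQ turn ↔ SPECQsat (fun (α : L) (Γ : Set L) => ¬ turn Γ α)) ∧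
      (PFECQ turn ↔ PFECQsat (fun (α : L) (Γ : Set L) => ¬ turn Γ α)) := by
  simp only [GECQsat, SECQsat, SPECQsat, PFECQsat, not_amstSatisfiable_iff_isExplosive]
  exact ⟨.rfl, .rfl, .rfl, .rfl⟩

/-- for the amst on domain `L` with `α ⊨ Γ` iff `Γ ⊬ α`, the syntactic
principles in `S` are equivalent to the corresponding sat-variants. -/
theorem syntactic_iff_sat_variants {L : Type*} [Infinite L] (turn : Set L → L → Prop) :
    (GECQ turn ↔ GECQsat (fun (α : L) (Γ : Set L) => ¬ turn Γ α)) ∧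
      (SECQ turn ↔ SECQsat (fun (α : L) (Γ : Set L) => ¬ turn Γ α)) ∧
      (SPECQ turn ↔ SPECQsat (fun (α : L) (Γ : Set L) => ¬ turn Γ α)) ∧
      (PFECQ turn ↔ PFECQsat (fun (α : L) (Γ : Set L) => ¬ turn Γ α)) :=
  syntactic_iff_sat_variants_general turn
end

section
/- Let 𝔐 = (M, ⊨, P(L)) be an abstract model structure with L infinite. Then: (i) if spECQ-sat holds in 𝔐 then gECQ-sat holds in 𝔐; (ii) if spECQ-sat holds in 𝔐 then pfECQ-sat holds in 𝔐; (iii) if gECQ-sat holds in 𝔐 then sECQ-sat holds in 𝔐; (iv) if spECQ-sat holds in 𝔐 then sECQ-sat holds in 𝔐; (v) if pfECQ-sat holds in 𝔐 then sECQ-sat holds in 𝔐. -/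
open Set

section Implications

variable {M L : Type*} {sat : M → Set L → Prop}

theorem SPECQsat.toPFECQsat (h : SPECQsat sat) : PFECQsat sat := fun Γ hΓ ↦ by
  obtain ⟨α, hne, hunsat⟩ := h Γ hΓ
  exact ⟨Γ ∪ {α}, hne, subset_union_left, hunsat⟩

theorem SPECQsat.toGECQsat [Nontrivial L] (h : SPECQsat sat) : GECQsat sat := fun α ↦ by
  obtain ⟨β, -, hunsat⟩ := h {α} (singleton_ne_univ α)
  exact ⟨β, by rwa [singleton_union] at hunsat⟩

theorem GECQsat.toSECQsat [Infinite L] (h : GECQsat sat) : SECQsat sat := fun α ↦ by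
  obtain ⟨β, hunsat⟩ := h α
  have hpair : {β} ∪ {α} = ({α, β} : Set L) := by rw [singleton_union, pair_comm]
  refine ⟨{β}, ?_, hpair ▸ hunsat⟩
  exact fun huniv ↦ infinite_univ (huniv ▸ toFinite ({β} ∪ {α}))

theorem PFECQsat.toSECQsat [Nontrivial L] (h : PFECQsat sat) : SECQsat sat := fun α ↦ by
  obtain ⟨Δ, hne, hαΔ, hunsat⟩ := h {α} (singleton_ne_univ α)
  refine ⟨Δ, ?_⟩
  rw [union_eq_self_of_subset_right hαΔ]
  exact ⟨hne, hunsat⟩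

end Implications

theorem sat_variant_implications_general {M L : Type*} [Infinite L]
    (sat : M → Set L → Prop) :
    (SPECQsat sat → GECQsat sat) ∧
      (SPECQsat sat → PFECQsat sat) ∧
      (GECQsat sat → SECQsat sat) ∧
      (SPECQsat sat → SECQsat sat) ∧
      (PFECQsat sat → SECQsat sat) :=
  ⟨SPECQsat.toGECQsat, SPECQsat.toPFECQsat, GECQsat.toSECQsat,
    fun h ↦ h.toGECQsat.toSECQsat, PFECQsat.toSECQsat⟩

/-- implications between the sat-variants. -/
theorem sat_variant_implications {M L : Type*} [Nonempty M] [Infinite L]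
    (sat : M → Set L → Prop) :
    (SPECQsat sat → GECQsat sat) ∧
      (SPECQsat sat → PFECQsat sat) ∧
      (GECQsat sat → SECQsat sat) ∧
      (SPECQsat sat → SECQsat sat) ∧
      (PFECQsat sat → SECQsat sat) :=
  sat_variant_implications_general sat
end

section
/- Let 𝔐 = (M, ⊨, P(L)) be a normal abstract model structure with L infinite. Then sECQ-sat holds in 𝔐 if and only if for each α ∈ L there exists β ∈ L \ {α} such that L \ {β} is not satisfiable. -/
open Set

theorem AmstNormal.satisfiable_mono {M L : Type*} {sat : M → Set L → Prop}
    (hnorm : AmstNormal sat) {Γ Δ : Set L} (hΓΔ : Γ ⊆ Δ) :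
    AmstSatisfiable sat Δ → AmstSatisfiable sat Γ :=
  fun ⟨m, hm⟩ => ⟨m, (hnorm m Γ).2 fun _ hα => (hnorm m Δ).1 hm _ (hΓΔ hα)⟩

theorem secqSat_iff_of_normal_general {M L : Type*}
    (sat : M → Set L → Prop) (hnorm : AmstNormal sat) :
    SECQsat sat ↔
      ∀ α : L, ∃ β : L, β ≠ α ∧ ¬ AmstSatisfiable sat ((univ : Set L) \ {β}) := by
  constructor
  · intro h α
    obtain ⟨Γ, hne, hunsat⟩ := h α
    obtain ⟨β, hβ⟩ := (ne_univ_iff_exists_notMem _).1 hne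
    refine ⟨β, ?_, fun hsat => hunsat (hnorm.satisfiable_mono ?_ hsat)⟩
    · rintro rfl
      exact hβ (mem_union_right _ rfl)
    · exact subset_sdiff_singleton (subset_univ _) hβ
  · intro h α
    obtain ⟨β, hβα, hunsat⟩ := h α
    have hα : α ∈ univ \ {β} := ⟨mem_univ α, hβα.symm⟩
    refine ⟨univ \ {β}, ?_, ?_⟩ <;> rw [union_singleton, insert_eq_of_mem hα]
    · exact (ne_univ_iff_exists_notMem _).2 ⟨β, fun hβ => hβ.2 rfl⟩
    · exact hunsat

/-- characterization of sECQ-sat for normal amsts. -/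
theorem secqSat_iff_of_normal {M L : Type*} [Nonempty M] [Infinite L]
    (sat : M → Set L → Prop) (hnorm : AmstNormal sat) :
    SECQsat sat ↔
      ∀ α : L, ∃ β : L, β ≠ α ∧ ¬ AmstSatisfiable sat ((univ : Set L) \ {β}) :=
  secqSat_iff_of_normal_general sat hnorm
end

section
/- Let 𝔐 = (M, ⊨, P(L)) be an abstract model structure with L infinite. Then: (i) if spECQ-finsat holds in 𝔐 then gECQ-finsat holds in 𝔐; (ii) if spECQ-finsat holds in 𝔐 then pfECQ-finsat holds in 𝔐; (iii) if gECQ-finsat holds in 𝔐 then sECQ-finsat holds in 𝔐; (iv) if spECQ-finsat holds in 𝔐 then sECQ-finsat holds in 𝔐; (v) if pfECQ-finsat holds in 𝔐 then sECQ-finsat holds in 𝔐. -/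
open Set

theorem Set.Finite.ne_univ {L : Type*} [Infinite L] {s : Set L} (hs : s.Finite) : s ≠ univ :=
  fun h => infinite_univ (h ▸ hs)

section FinsatVariants

variable {M L : Type*} {sat : M → Set L → Prop}

theorem sECQfinsat_of_forall_exists_mem
    (h : ∀ α : L, ∃ Δ : Set L, α ∈ Δ ∧ Δ ≠ univ ∧ ¬ AmstFinSatisfiable sat Δ) :
    SECQfinsat sat := by
  intro α
  obtain ⟨Δ, hα, hΔ, hns⟩ := h α
  rw [← union_eq_self_of_subset_right (singleton_subset_iff.mpr hα)] at hΔ hns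
  exact ⟨Δ, hΔ, hns⟩

theorem SPECQfinsat.gECQfinsat [Infinite L] (h : SPECQfinsat sat) : GECQfinsat sat := by
  intro α
  obtain ⟨β, -, hns⟩ := h {α} (finite_singleton α).ne_univ
  exact ⟨β, by rwa [singleton_union] at hns⟩

theorem SPECQfinsat.pFECQfinsat (h : SPECQfinsat sat) : PFECQfinsat sat := by
  intro Γ hΓ
  obtain ⟨α, hne, hns⟩ := h Γ hΓ
  exact ⟨Γ ∪ {α}, hne, subset_union_left, hns⟩

theorem GECQfinsat.sECQfinsat [Infinite L] (h : GECQfinsat sat) : SECQfinsat sat := by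
  refine sECQfinsat_of_forall_exists_mem fun α => ?_
  obtain ⟨β, hns⟩ := h α
  exact ⟨{α, β}, mem_insert α _, (toFinite _).ne_univ, hns⟩

theorem PFECQfinsat.sECQfinsat [Infinite L] (h : PFECQfinsat sat) : SECQfinsat sat := by
  refine sECQfinsat_of_forall_exists_mem fun α => ?_
  obtain ⟨Δ, hΔ, hαΔ, hns⟩ := h {α} (finite_singleton α).ne_univ
  exact ⟨Δ, singleton_subset_iff.mp hαΔ, hΔ, hns⟩

end FinsatVariants

theorem finsat_variant_implications_general {M L : Type*} [Infinite L]
    (sat : M → Set L → Prop) :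
    (SPECQfinsat sat → GECQfinsat sat) ∧
      (SPECQfinsat sat → PFECQfinsat sat) ∧
      (GECQfinsat sat → SECQfinsat sat) ∧
      (SPECQfinsat sat → SECQfinsat sat) ∧
      (PFECQfinsat sat → SECQfinsat sat) :=
  ⟨SPECQfinsat.gECQfinsat, SPECQfinsat.pFECQfinsat, GECQfinsat.sECQfinsat,
    fun h => h.gECQfinsat.sECQfinsat, PFECQfinsat.sECQfinsat⟩

/-- implications between the finsat-variants. -/
theorem finsat_variant_implications {M L : Type*} [Nonempty M] [Infinite L]
    (sat : M → Set L → Prop) :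
    (SPECQfinsat sat → GECQfinsat sat) ∧
      (SPECQfinsat sat → PFECQfinsat sat) ∧
      (GECQfinsat sat → SECQfinsat sat) ∧
      (SPECQfinsat sat → SECQfinsat sat) ∧
      (PFECQfinsat sat → SECQfinsat sat) :=
  finsat_variant_implications_general sat
end

section
/- Let 𝔐 = (M, ⊨, P(L)) be an abstract model structure with L infinite. The following are equivalent: (i) sECQ-finsat holds in 𝔐; (ii) L is not finitely satisfiable; (iii) for all α ∈ L there exists a finite Γ ⊆ L such that Γ∪{α} ⊊ L and Γ∪{α} is not finitely satisfiable; (iv) for all α ∈ L there exists β ∈ L \ {α} such that L \ {β} is not finitely satisfiable. -/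
open Set

/-! A set is finitely unsatisfiable exactly when it contains a finite unsatisfiable subset, and then
every superset is finitely unsatisfiable too, `L` above all. Conversely, if `L` is finitely
unsatisfiable, a finite unsatisfiable `Δ ⊆ L` witnesses every condition at once: since `L` is
infinite, `Δ ∪ {α}` is a proper subset of `L`, and some `β ∉ Δ ∪ {α}` leaves `Δ ⊆ L \ {β}`. -/

section FiniteSatisfiability

variable {M L : Type*} {sat : M → Set L → Prop}

theorem AmstFinSatisfiable.mono {Γ Δ : Set L} (h : AmstFinSatisfiable sat Δ) (hΓΔ : Γ ⊆ Δ) :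
    AmstFinSatisfiable sat Γ :=
  fun Θ hΘ hfin => h Θ (hΘ.trans hΓΔ) hfin

theorem not_amstFinSatisfiable_iff {Γ : Set L} :
    ¬ AmstFinSatisfiable sat Γ ↔ ∃ Δ ⊆ Γ, Δ.Finite ∧ ¬ AmstSatisfiable sat Δ := by
  simp [AmstFinSatisfiable]

theorem not_amstFinSatisfiable_univ_of_not {Γ : Set L} (h : ¬ AmstFinSatisfiable sat Γ) :
    ¬ AmstFinSatisfiable sat univ :=
  fun huniv => h (huniv.mono (subset_univ Γ))

theorem SECQfinsat.not_amstFinSatisfiable_univ [Nonempty L] (h : SECQfinsat sat) :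
    ¬ AmstFinSatisfiable sat univ :=
  let ⟨_, _, hΓ⟩ := h (Classical.arbitrary L)
  not_amstFinSatisfiable_univ_of_not hΓ

theorem exists_finite_union_singleton_ne_univ_not_amstFinSatisfiable [Infinite L]
    (h : ¬ AmstFinSatisfiable sat univ) (α : L) :
    ∃ Γ : Set L, Γ.Finite ∧ Γ ∪ {α} ≠ univ ∧ ¬ AmstFinSatisfiable sat (Γ ∪ {α}) := by
  obtain ⟨Δ, -, hΔ, hunsat⟩ := not_amstFinSatisfiable_iff.mp h
  refine ⟨Δ, hΔ, fun heq => infinite_univ (heq ▸ hΔ.union (finite_singleton α)), ?_⟩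
  exact not_amstFinSatisfiable_iff.mpr ⟨Δ, subset_union_left, hΔ, hunsat⟩

theorem exists_ne_not_amstFinSatisfiable_univ_diff_singleton [Infinite L]
    (h : ¬ AmstFinSatisfiable sat univ) (α : L) :
    ∃ β : L, β ≠ α ∧ ¬ AmstFinSatisfiable sat (univ \ {β}) := by
  obtain ⟨Δ, -, hΔ, hunsat⟩ := not_amstFinSatisfiable_iff.mp h
  obtain ⟨β, hβ⟩ := (hΔ.union (finite_singleton α)).infinite_compl.nonempty
  simp only [mem_compl_iff, mem_union, mem_singleton_iff, not_or] at hβ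
  have hΔβ : Δ ⊆ univ \ {β} := fun x hx => ⟨trivial, fun hxβ => hβ.1 (hxβ ▸ hx)⟩
  exact ⟨β, hβ.2, not_amstFinSatisfiable_iff.mpr ⟨Δ, hΔβ, hΔ, hunsat⟩⟩

theorem secqFinsat_iff_not_amstFinSatisfiable_univ [Infinite L] :
    SECQfinsat sat ↔ ¬ AmstFinSatisfiable sat univ :=
  ⟨SECQfinsat.not_amstFinSatisfiable_univ, fun h α =>
    (exists_finite_union_singleton_ne_univ_not_amstFinSatisfiable h α).imp fun _ hΓ => hΓ.2⟩

end FiniteSatisfiability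

theorem secqFinsat_characterization_general {M L : Type*} [Infinite L]
    (sat : M → Set L → Prop) :
    (SECQfinsat sat ↔ ¬ AmstFinSatisfiable sat (univ : Set L)) ∧
      (SECQfinsat sat ↔
        ∀ α : L, ∃ Γ : Set L, Γ.Finite ∧ Γ ∪ {α} ≠ univ ∧
          ¬ AmstFinSatisfiable sat (Γ ∪ {α})) ∧
      (SECQfinsat sat ↔
        ∀ α : L, ∃ β : L, β ≠ α ∧
          ¬ AmstFinSatisfiable sat ((univ : Set L) \ {β})) := by
  rw [secqFinsat_iff_not_amstFinSatisfiable_univ]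
  refine ⟨Iff.rfl, ⟨exists_finite_union_singleton_ne_univ_not_amstFinSatisfiable, ?_⟩,
    ⟨exists_ne_not_amstFinSatisfiable_univ_diff_singleton, ?_⟩⟩
  · intro h
    obtain ⟨Γ, -, -, hΓ⟩ := h (Classical.arbitrary L)
    exact not_amstFinSatisfiable_univ_of_not hΓ
  · intro h
    obtain ⟨β, -, hβ⟩ := h (Classical.arbitrary L)
    exact not_amstFinSatisfiable_univ_of_not hβ

/-- characterization of sECQ-finsat. -/
theorem secqFinsat_characterization {M L : Type*} [Nonempty M] [Infinite L]
    (sat : M → Set L → Prop) :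
    (SECQfinsat sat ↔ ¬ AmstFinSatisfiable sat (univ : Set L)) ∧
      (SECQfinsat sat ↔
        ∀ α : L, ∃ Γ : Set L, Γ.Finite ∧ Γ ∪ {α} ≠ univ ∧
          ¬ AmstFinSatisfiable sat (Γ ∪ {α})) ∧
      (SECQfinsat sat ↔
        ∀ α : L, ∃ β : L, β ≠ α ∧
          ¬ AmstFinSatisfiable sat ((univ : Set L) \ {β})) :=
  secqFinsat_characterization_general sat
end

section
/- Let 𝔐 = (M, ⊨, P(L)) be an abstract model structure with L infinite. Suppose there exist Σ, Δ ⊆ L such that Σ ∪ Δ is finite, Σ ∩ Δ = ∅, and both Σ and Δ are not satisfiable. Then pfECQ-finsat holds in 𝔐. -/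
open Set

/-! The complement of a proper `Γ` cannot lie in both of the disjoint sets `Σ` and `Δ`, so `Γ`
extended by one of them is still proper; it contains a finite unsatisfiable set, hence is not
finitely satisfiable. -/

theorem Set.union_ne_univ_or_union_ne_univ {α : Type*} {Γ S D : Set α} (hΓ : Γ ≠ univ)
    (hSD : Disjoint S D) : Γ ∪ S ≠ univ ∨ Γ ∪ D ≠ univ := by
  rw [Ne, Ne, ← compl_subset_iff_union, ← compl_subset_iff_union, ← not_and_or]
  rintro ⟨hS, hD⟩
  exact hΓ (compl_empty_iff.mp (disjoint_self.mp (hSD.mono hS hD)))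

theorem pfecqFinsat_of_disjoint_unsat_general {M L : Type*}
    (sat : M → Set L → Prop)
    (h : ∃ S D : Set L, (S ∪ D).Finite ∧ S ∩ D = ∅ ∧
      ¬ AmstSatisfiable sat S ∧ ¬ AmstSatisfiable sat D) :
    PFECQfinsat sat := by
  obtain ⟨S, D, hfin, hdisj, hS, hD⟩ := h
  intro Γ hΓ
  rcases union_ne_univ_or_union_ne_univ hΓ (disjoint_iff_inter_eq_empty.mpr hdisj) with hne | hne
  · exact ⟨Γ ∪ S, hne, subset_union_left,
      fun hfs => hS (hfs S subset_union_right (hfin.subset subset_union_left))⟩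
  · exact ⟨Γ ∪ D, hne, subset_union_left,
      fun hfs => hD (hfs D subset_union_right (hfin.subset subset_union_right))⟩

/-- two disjoint unsatisfiable sets with finite union force pfECQ-finsat. -/
theorem pfecqFinsat_of_disjoint_unsat {M L : Type*} [Nonempty M] [Infinite L]
    (sat : M → Set L → Prop)
    (h : ∃ S D : Set L, (S ∪ D).Finite ∧ S ∩ D = ∅ ∧
      ¬ AmstSatisfiable sat S ∧ ¬ AmstSatisfiable sat D) :
    PFECQfinsat sat :=
  pfecqFinsat_of_disjoint_unsat_general sat h
end
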